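/- arXiv:0809.2454 — 2 statements merged into one kernel-verified Lean document; each statement's English description precedes it below -/
import Mathlib

section
/- Let g(y₂) = Σ_{k≥1} c_k e^{-k y₂} on (0,∞) with Σ_{k≥1} |c_k|² k < ∞. Then for every α ∈ ℝ with α > -1, ∫₀^∞ |g(y₂)|² y₂^α dy₂ ≤ K(α) Σ_{k≥1} k |c_k|², where K(α) depends only on α. In particular g belongs to every weighted L² space with polynomial weight y₂^α, α > -1. -/
/-!
Weighted Cauchy–Schwarz with weights `k` gives, pointwise,
`|g(y)|² ≤ (∑ k |c_k|²) · ∑ e^{-2ky}/k = (∑ k |c_k|²) · (-log (1 - e^{-2y}))`.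
Integrating the logarithmic series termwise against `y^α`,
`∫₀^∞ y^α (-log (1 - e^{-2y})) dy = Γ(α+1) 2^{-(α+1)} ∑ k^{-(α+2)}`,
which is finite exactly because `α + 2 > 1`; this is the constant `K(α)`.
-/

open MeasureTheory Real Set Filter

theorem summable_mul_and_tsum_mul_sq_le_sq_mul_sq {ι : Type*} {f g : ι → ℝ}
    (hf : Summable fun i => f i ^ 2) (hg : Summable fun i => g i ^ 2) :
    (Summable fun i => f i * g i) ∧
      (∑' i, f i * g i) ^ 2 ≤ (∑' i, f i ^ 2) * ∑' i, g i ^ 2 := by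
  have hfg : Summable fun i => f i * g i :=
    (hf.add hg).of_norm_bounded fun i => by
      rw [norm_mul, Real.norm_eq_abs, Real.norm_eq_abs, ← sq_abs (f i), ← sq_abs (g i)]
      nlinarith [sq_nonneg (|f i| - |g i|), abs_nonneg (f i), abs_nonneg (g i)]
  refine ⟨hfg, le_of_tendsto_of_tendsto' (hfg.hasSum.pow 2)
    (Tendsto.mul hf.hasSum hg.hasSum) ?_⟩
  exact fun s => Finset.sum_mul_sq_le_sq_mul_sq s f g

theorem norm_tsum_mul_sq_le {ι R : Type*} [NormedRing R] {a b : ι → R} {w : ι → ℝ}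
    (hw : ∀ i, 0 < w i) (ha : Summable fun i => w i * ‖a i‖ ^ 2)
    (hb : Summable fun i => ‖b i‖ ^ 2 / w i) :
    ‖∑' i, a i * b i‖ ^ 2 ≤ (∑' i, w i * ‖a i‖ ^ 2) * ∑' i, ‖b i‖ ^ 2 / w i := by
  have hfg : ∀ i, √(w i) * ‖a i‖ * (‖b i‖ / √(w i)) = ‖a i‖ * ‖b i‖ := fun i => by
    field_simp [(sqrt_pos.2 (hw i)).ne']
  have hf2 : ∀ i, (√(w i) * ‖a i‖) ^ 2 = w i * ‖a i‖ ^ 2 := fun i => by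
    rw [mul_pow, sq_sqrt (hw i).le]
  have hg2 : ∀ i, (‖b i‖ / √(w i)) ^ 2 = ‖b i‖ ^ 2 / w i := fun i => by
    rw [div_pow, sq_sqrt (hw i).le]
  obtain ⟨hs, hcs⟩ := summable_mul_and_tsum_mul_sq_le_sq_mul_sq
    (f := fun i => √(w i) * ‖a i‖) (g := fun i => ‖b i‖ / √(w i))
    (by simpa only [hf2] using ha) (by simpa only [hg2] using hb)
  simp only [hfg, hf2, hg2] at hs hcs
  calc ‖∑' i, a i * b i‖ ^ 2 ≤ (∑' i, ‖a i‖ * ‖b i‖) ^ 2 :=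
        pow_le_pow_left₀ (norm_nonneg _) (tsum_of_norm_bounded hs.hasSum fun i => norm_mul_le _ _) 2
    _ ≤ _ := hcs

theorem integrable_and_hasSum_integral_of_hasSum {α E ι : Type*} [MeasurableSpace α]
    {μ : Measure α} [NormedAddCommGroup E] [NormedSpace ℝ E] [CompleteSpace E] [Countable ι]
    {F : ι → α → E} {f : α → E} (hF : ∀ i, Integrable (F i) μ)
    (hs : Summable fun i => ∫ a, ‖F i a‖ ∂μ) (hf : ∀ᵐ a ∂μ, HasSum (fun i => F i a) (f a)) :
    Integrable f μ ∧ HasSum (fun i => ∫ a, F i a ∂μ) (∫ a, f a ∂μ) := by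
  have hmeas : AEStronglyMeasurable f μ :=
    aestronglyMeasurable_of_tendsto_ae (SummationFilter.unconditional ι).filter
      (fun s => Finset.aestronglyMeasurable_sum s fun i _ => (hF i).1)
      (by simpa only [Finset.sum_apply, HasSum] using hf)
  have hfin : ∫⁻ a, ‖f a‖ₑ ∂μ < ⊤ :=
    calc ∫⁻ a, ‖f a‖ₑ ∂μ ≤ ∫⁻ a, ∑' i, ‖F i a‖ₑ ∂μ :=
          lintegral_mono_ae (hf.mono fun a h => h.tsum_eq ▸ enorm_tsum_le_tsum_enorm)
      _ = ∑' i, ∫⁻ a, ‖F i a‖ₑ ∂μ := lintegral_tsum fun i => (hF i).1.enorm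
      _ = ENNReal.ofReal (∑' i, ∫ a, ‖F i a‖ ∂μ) := by
          rw [ENNReal.ofReal_tsum_of_nonneg (fun i => integral_nonneg fun a => norm_nonneg _) hs]
          simp_rw [ofReal_integral_norm_eq_lintegral_enorm (hF _)]
      _ < ⊤ := ENNReal.ofReal_lt_top
  refine ⟨⟨hmeas, hfin⟩, ?_⟩
  rw [integral_congr_ae (hf.mono fun a h => h.tsum_eq.symm)]
  exact hasSum_integral_of_summable_integral_norm hF hs

theorem hasSum_exp_neg_mul_div_succ {y : ℝ} (hy : 0 < y) :
    HasSum (fun k : ℕ => exp (-(2 * ((k : ℝ) + 1) * y)) / ((k : ℝ) + 1))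
      (-log (1 - exp (-(2 * y)))) := by
  have hx : |exp (-(2 * y))| < 1 := by
    rw [abs_of_pos (exp_pos _), exp_lt_one_iff]
    linarith
  convert hasSum_pow_div_log_of_abs_lt_one hx using 2 with k
  rw [← exp_nat_mul]
  push_cast
  ring_nf

theorem integrableOn_rpow_mul_exp_neg_mul_div_succ {α : ℝ} (hα : -1 < α) (k : ℕ) :
    IntegrableOn (fun y => y ^ α * (exp (-(2 * ((k : ℝ) + 1) * y)) / ((k : ℝ) + 1))) (Ioi 0) := by
  have h := integrableOn_rpow_mul_exp_neg_mul_rpow hα zero_lt_one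
    (by positivity : (0 : ℝ) < 2 * ((k : ℝ) + 1))
  refine IntegrableOn.congr_fun (h.div_const ((k : ℝ) + 1)) (fun y _ => ?_) measurableSet_Ioi
  simp only [rpow_one, neg_mul, mul_div_assoc]

theorem integral_rpow_mul_exp_neg_mul_div_succ {α : ℝ} (hα : -1 < α) (k : ℕ) :
    ∫ y in Ioi 0, y ^ α * (exp (-(2 * ((k : ℝ) + 1) * y)) / ((k : ℝ) + 1)) =
      Gamma (α + 1) / 2 ^ (α + 1) / ((k : ℝ) + 1) ^ (α + 2) := by
  have hk : (0 : ℝ) < (k : ℝ) + 1 := by positivity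
  have h := integral_rpow_mul_exp_neg_mul_Ioi (by linarith : 0 < α + 1)
    (by positivity : (0 : ℝ) < 2 * ((k : ℝ) + 1))
  simp only [add_sub_cancel_right] at h
  simp_rw [← mul_div_assoc, integral_div, h]
  rw [show α + 2 = α + 1 + 1 by ring, rpow_add_one hk.ne', one_div, inv_rpow (by positivity),
    mul_rpow zero_le_two hk.le]
  field_simp

theorem integrableOn_and_hasSum_integral_rpow_mul_neg_log {α : ℝ} (hα : -1 < α) :
    IntegrableOn (fun y => y ^ α * -log (1 - exp (-(2 * y)))) (Ioi 0) ∧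
      HasSum (fun k : ℕ => Gamma (α + 1) / 2 ^ (α + 1) / ((k : ℝ) + 1) ^ (α + 2))
        (∫ y in Ioi 0, y ^ α * -log (1 - exp (-(2 * y)))) := by
  have hnorm : ∀ k : ℕ,
      ∫ y in Ioi 0, ‖y ^ α * (exp (-(2 * ((k : ℝ) + 1) * y)) / ((k : ℝ) + 1))‖ =
        Gamma (α + 1) / 2 ^ (α + 1) / ((k : ℝ) + 1) ^ (α + 2) := fun k => by
    rw [← integral_rpow_mul_exp_neg_mul_div_succ hα k]
    refine setIntegral_congr_fun measurableSet_Ioi fun y (hy : 0 < y) => norm_of_nonneg ?_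
    positivity
  have hsum : Summable fun k : ℕ => Gamma (α + 1) / 2 ^ (α + 1) / ((k : ℝ) + 1) ^ (α + 2) := by
    have h := (summable_one_div_nat_add_rpow 1 (α + 2)).2 (by linarith)
    refine (h.mul_left (Gamma (α + 1) / 2 ^ (α + 1))).congr fun k => ?_
    rw [abs_of_pos (by positivity)]
    ring
  have h := integrable_and_hasSum_integral_of_hasSum
    (integrableOn_rpow_mul_exp_neg_mul_div_succ hα) (hsum.congr fun k => (hnorm k).symm)
    ((ae_restrict_mem measurableSet_Ioi).mono
      fun y (hy : 0 < y) => (hasSum_exp_neg_mul_div_succ hy).mul_left (y ^ α))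
  simp only [integral_rpow_mul_exp_neg_mul_div_succ hα] at h
  exact h

theorem norm_tsum_mul_exp_neg_mul_sq_le {c : ℕ → ℂ}
    (hc : Summable fun k : ℕ => ((k : ℝ) + 1) * ‖c k‖ ^ 2) {y : ℝ} (hy : 0 < y) :
    ‖∑' k : ℕ, c k * (exp (-((k : ℝ) + 1) * y) : ℂ)‖ ^ 2 ≤
      (∑' k : ℕ, ((k : ℝ) + 1) * ‖c k‖ ^ 2) * -log (1 - exp (-(2 * y))) := by
  have hb : ∀ k : ℕ, ‖(exp (-((k : ℝ) + 1) * y) : ℂ)‖ ^ 2 / ((k : ℝ) + 1) =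
      exp (-(2 * ((k : ℝ) + 1) * y)) / ((k : ℝ) + 1) := fun k => by
    rw [Complex.norm_real, norm_of_nonneg (exp_pos _).le, ← exp_nat_mul]
    ring_nf
  have h := hasSum_exp_neg_mul_div_succ hy
  simp_rw [← hb] at h
  rw [← h.tsum_eq]
  exact norm_tsum_mul_sq_le (fun k => by positivity) hc h.summable

/-- If `g(y₂) = Σ_{k≥1} c_k e^{-k y₂}` with `Σ k |c_k|² < ∞`, then for every `α > -1`,
`∫₀^∞ |g(y₂)|² y₂^α dy₂ ≤ K(α) Σ k |c_k|²` with `K(α)` depending only on `α`. -/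
theorem stmt12 (α : ℝ) (hα : -1 < α) :
    ∃ K : ℝ, 0 < K ∧ ∀ c : ℕ → ℂ,
      Summable (fun k : ℕ => ((k : ℝ) + 1) * ‖c k‖ ^ 2) →
      (∫ y in Ioi (0 : ℝ),
          ‖∑' k : ℕ, c k * (Real.exp (-((k : ℝ) + 1) * y) : ℂ)‖ ^ 2 * y ^ α)
        ≤ K * ∑' k : ℕ, ((k : ℝ) + 1) * ‖c k‖ ^ 2 := by
  obtain ⟨hint, hmoment⟩ := integrableOn_and_hasSum_integral_rpow_mul_neg_log hα
  have hΓ : 0 < Gamma (α + 1) := Gamma_pos_of_pos (by linarith)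
  refine ⟨_, hmoment.summable.tsum_pos (fun k => by positivity) 0 (by positivity), fun c hc => ?_⟩
  set S := ∑' k : ℕ, ((k : ℝ) + 1) * ‖c k‖ ^ 2
  calc (∫ y in Ioi 0, ‖∑' k : ℕ, c k * (exp (-((k : ℝ) + 1) * y) : ℂ)‖ ^ 2 * y ^ α)
      ≤ ∫ y in Ioi 0, S * (y ^ α * -log (1 - exp (-(2 * y)))) := by
        refine integral_mono_of_nonneg ?_ (hint.const_mul S) ?_ <;>
          filter_upwards [ae_restrict_mem measurableSet_Ioi] with y (hy : 0 < y)
        · positivity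
        · calc _ ≤ S * -log (1 - exp (-(2 * y))) * y ^ α := by
                gcongr
                exact norm_tsum_mul_exp_neg_mul_sq_le hc hy
            _ = _ := by ring
    _ = _ := by rw [integral_const_mul, ← hmoment.tsum_eq, mul_comm]
end

section
/- Let α ∈ ℝ, α ≥ 0, and let u be a smooth compactly supported function on an open set Ω ⊆ ℝ² with weight ρ(y) = √(y₁² + (y₂+1)²) ≥ 1 on Ω. Suppose the weighted Poincaré inequality ‖u ρ^{α−1}‖_{L²(Ω)} ≤ (1/(2α₀)) ‖ρ^α ∇u‖_{L²(Ω)} holds for some α₀ > 0. Then the bilinear form a(u,v) = ∫_Ω ∇u·∇v satisfies a(u, u ρ^{2α}) ≥ (1 − α/α₀) ‖ρ^α ∇u‖²_{L²(Ω)}. -/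
open MeasureTheory Real Set

/-- helper: integrability on an open set of a function continuous on it, vanishing
outside a compact set, and bounded. -/
lemma aux_integrableOn {h : ℝ × ℝ → ℝ} {Ω K : Set (ℝ × ℝ)} (hΩ : IsOpen Ω)
    (hK : IsCompact K) (hc : ContinuousOn h Ω) {C : ℝ}
    (hb : ∀ y ∈ Ω, |h y| ≤ C) (h0 : ∀ y, y ∉ K → h y = 0) :
    IntegrableOn h Ω := by
  have hmeas : AEStronglyMeasurable h (volume.restrict Ω) :=
    hc.aestronglyMeasurable hΩ.measurableSet
  have hind : Integrable (K.indicator fun _ => C) (volume.restrict Ω) := by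
    rw [integrable_indicator_iff hK.measurableSet]
    exact integrableOn_const (lt_of_le_of_lt (Measure.restrict_apply_le _ _)
      hK.measure_lt_top).ne
  refine Integrable.mono' hind hmeas ?_
  refine (ae_restrict_iff' hΩ.measurableSet).2 (ae_of_all _ fun y hy => ?_)
  by_cases hyK : y ∈ K
  · simpa [Set.indicator_of_mem hyK, Real.norm_eq_abs] using hb y hy
  · simp [Set.indicator_of_notMem hyK, Real.norm_eq_abs, h0 y hyK]

/-- Cauchy–Schwarz in ℝ². -/
lemma aux_cs (a b c d : ℝ) : |a * c + b * d| ≤ Real.sqrt (a ^ 2 + b ^ 2) * Real.sqrt (c ^ 2 + d ^ 2) := by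
  have h1 : |a * c + b * d| = Real.sqrt ((a * c + b * d) ^ 2) := (Real.sqrt_sq_eq_abs _).symm
  rw [h1, ← Real.sqrt_mul (by positivity)]
  exact Real.sqrt_le_sqrt (by nlinarith [sq_nonneg (a * d - b * c)])

/-- derivative of the squared-distance function. -/
lemma aux_hasFDerivAt_g (y : ℝ × ℝ) :
    HasFDerivAt (fun z : ℝ × ℝ => z.1 ^ 2 + (z.2 + 1) ^ 2)
      ((y.1 • ContinuousLinearMap.fst ℝ ℝ ℝ + y.1 • ContinuousLinearMap.fst ℝ ℝ ℝ) +
       ((y.2 + 1) • ContinuousLinearMap.snd ℝ ℝ ℝ +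
        (y.2 + 1) • ContinuousLinearMap.snd ℝ ℝ ℝ)) y := by
  have h1 : HasFDerivAt (fun z : ℝ × ℝ => z.1 * z.1)
      (y.1 • ContinuousLinearMap.fst ℝ ℝ ℝ + y.1 • ContinuousLinearMap.fst ℝ ℝ ℝ) y :=
    (hasFDerivAt_fst (p := y)).mul (hasFDerivAt_fst (p := y))
  have h2 : HasFDerivAt (fun z : ℝ × ℝ => (z.2 + 1) * (z.2 + 1))
      ((y.2 + 1) • ContinuousLinearMap.snd ℝ ℝ ℝ + (y.2 + 1) • ContinuousLinearMap.snd ℝ ℝ ℝ) y :=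
    ((hasFDerivAt_snd (p := y)).add_const 1).mul ((hasFDerivAt_snd (p := y)).add_const 1)
  have := h1.add h2
  simpa only [← pow_two, Pi.add_def] using this

/-- derivative of `u * g ^ α` evaluated at a direction. -/
lemma aux_fderiv_eval {u : ℝ × ℝ → ℝ} (hu : ContDiff ℝ (⊤ : ℕ∞) u) {α : ℝ} {y : ℝ × ℝ}
    (hy : (0:ℝ) < y.1 ^ 2 + (y.2 + 1) ^ 2) (v : ℝ × ℝ) :
    fderiv ℝ (fun z => u z * (z.1 ^ 2 + (z.2 + 1) ^ 2) ^ α) y v =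
      fderiv ℝ u y v * (y.1 ^ 2 + (y.2 + 1) ^ 2) ^ α +
        u y * (α * (y.1 ^ 2 + (y.2 + 1) ^ 2) ^ (α - 1) *
          (2 * y.1 * v.1 + 2 * (y.2 + 1) * v.2)) := by
  have hg := aux_hasFDerivAt_g y
  have hr := hg.rpow_const (p := α) (Or.inl hy.ne')
  have hum := (hu.differentiable (by simp) y).hasFDerivAt.mul hr
  rw [show (fun z => u z * (z.1 ^ 2 + (z.2 + 1) ^ 2) ^ α) = u * fun x => (x.1 ^ 2 + (x.2 + 1) ^ 2) ^ α from rfl, hum.fderiv]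
  simp only [ContinuousLinearMap.add_apply, ContinuousLinearMap.coe_smul', Pi.smul_apply,
    ContinuousLinearMap.smul_apply, ContinuousLinearMap.coe_fst', ContinuousLinearMap.coe_snd',
    smul_eq_mul]
  ring

/-- integrability of `φ * ψ ^ β` on `Ω` where `φ` is continuous vanishing outside the
compact `K` and `ψ` is continuous with `1 ≤ ψ` on `Ω`. -/
lemma aux_int2 {φ ψ : ℝ × ℝ → ℝ} {Ω K : Set (ℝ × ℝ)} (hΩ : IsOpen Ω) (hK : IsCompact K)
    (hφ : Continuous φ) (hφK : ∀ y, y ∉ K → φ y = 0) (hψ : Continuous ψ)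
    (hψΩ : ∀ y ∈ Ω, (1:ℝ) ≤ ψ y) (β : ℝ) :
    IntegrableOn (fun y => φ y * ψ y ^ β) Ω := by
  obtain ⟨Cφ, hCφ⟩ := hK.exists_bound_of_continuousOn hφ.continuousOn
  obtain ⟨M, hM⟩ := hK.exists_bound_of_continuousOn hψ.continuousOn
  set C : ℝ := max Cφ 0 * max ((max M 1) ^ β) 1 with hCdef
  have hC0 : 0 ≤ C :=
    mul_nonneg (le_max_right _ _) (le_trans zero_le_one (le_max_right _ _))
  refine aux_integrableOn hΩ hK ?_ (C := C) ?_ (fun y hy => by simp [hφK y hy])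
  · exact hφ.continuousOn.mul (hψ.continuousOn.rpow_const
      (fun y hy => Or.inl (lt_of_lt_of_le one_pos (hψΩ y hy)).ne'))
  · intro y hy
    by_cases hyK : y ∈ K
    · have hψ1 : (1:ℝ) ≤ ψ y := hψΩ y hy
      have hψM : ψ y ≤ max M 1 := le_trans (le_trans (le_abs_self _) (hM y hyK)) (le_max_left _ _)
      have hψb : ψ y ^ β ≤ max ((max M 1) ^ β) 1 := by
        rcases le_or_gt 0 β with hβ | hβ
        · exact le_trans (Real.rpow_le_rpow (le_trans zero_le_one hψ1) hψM hβ) (le_max_left _ _)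
        · exact le_trans (Real.rpow_le_one_of_one_le_of_nonpos hψ1 hβ.le) (le_max_right _ _)
      have hψb0 : (0:ℝ) ≤ ψ y ^ β := Real.rpow_nonneg (le_trans zero_le_one hψ1) _
      rw [abs_mul, abs_of_nonneg hψb0]
      exact mul_le_mul (le_trans (hCφ y hyK) (le_max_left _ _)) hψb hψb0 (le_max_right _ _)
    · simp [hφK y hyK, hC0]
/-- Inf-sup coercivity computation: under the weighted Poincaré inequality
`‖u ρ^{α-1}‖_{L²(Ω)} ≤ (1/(2α₀)) ‖ρ^α ∇u‖_{L²(Ω)}`, the bilinear form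
`a(u,v) = ∫_Ω ∇u·∇v` satisfies `a(u, u ρ^{2α}) ≥ (1 - α/α₀) ‖ρ^α ∇u‖²`. -/
theorem stmt16 (Ω : Set (ℝ × ℝ)) (hΩ : IsOpen Ω) (α α₀ : ℝ) (hα : 0 ≤ α)
    (hα₀ : 0 < α₀) (u : ℝ × ℝ → ℝ) (hu : ContDiff ℝ (⊤ : ℕ∞) u)
    (hsupp : HasCompactSupport u)
    (hρ : ∀ y ∈ Ω, (1 : ℝ) ≤ Real.sqrt (y.1 ^ 2 + (y.2 + 1) ^ 2))
    (hPoincare :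
      Real.sqrt (∫ y in Ω,
          (u y) ^ 2 * Real.sqrt (y.1 ^ 2 + (y.2 + 1) ^ 2) ^ (2 * (α - 1)))
        ≤ (1 / (2 * α₀)) *
          Real.sqrt (∫ y in Ω,
            Real.sqrt (y.1 ^ 2 + (y.2 + 1) ^ 2) ^ (2 * α) *
              ((fderiv ℝ u y (1, 0)) ^ 2 + (fderiv ℝ u y (0, 1)) ^ 2))) :
    (1 - α / α₀) *
        (∫ y in Ω, Real.sqrt (y.1 ^ 2 + (y.2 + 1) ^ 2) ^ (2 * α) *
          ((fderiv ℝ u y (1, 0)) ^ 2 + (fderiv ℝ u y (0, 1)) ^ 2))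
      ≤ ∫ y in Ω,
          (fderiv ℝ u y (1, 0) *
            fderiv ℝ (fun z => u z * Real.sqrt (z.1 ^ 2 + (z.2 + 1) ^ 2) ^ (2 * α)) y (1, 0)
          + fderiv ℝ u y (0, 1) *
            fderiv ℝ (fun z => u z * Real.sqrt (z.1 ^ 2 + (z.2 + 1) ^ 2) ^ (2 * α)) y (0, 1)) := by
  -- notations
  have hg0 : ∀ z : ℝ × ℝ, (0:ℝ) ≤ z.1 ^ 2 + (z.2 + 1) ^ 2 := fun z => by positivity
  have hkey : ∀ (z : ℝ × ℝ) (β : ℝ),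
      Real.sqrt (z.1 ^ 2 + (z.2 + 1) ^ 2) ^ (2 * β) = (z.1 ^ 2 + (z.2 + 1) ^ 2) ^ β := by
    intro z β
    rw [Real.sqrt_eq_rpow, ← Real.rpow_mul (hg0 z)]
    congr 1
    ring
  simp only [hkey] at hPoincare ⊢
  have hgΩ : ∀ y ∈ Ω, (1:ℝ) ≤ y.1 ^ 2 + (y.2 + 1) ^ 2 := by
    intro y hy
    have h := hρ y hy
    nlinarith [Real.sq_sqrt (hg0 y), Real.sqrt_nonneg (y.1 ^ 2 + (y.2 + 1) ^ 2)]
  set g : ℝ × ℝ → ℝ := fun z => z.1 ^ 2 + (z.2 + 1) ^ 2 with hgdef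
  set D1 : ℝ × ℝ → ℝ := fun y => fderiv ℝ u y (1, 0) with hD1def
  set D2 : ℝ × ℝ → ℝ := fun y => fderiv ℝ u y (0, 1) with hD2def
  set A : ℝ × ℝ → ℝ := fun y => g y ^ α * (D1 y ^ 2 + D2 y ^ 2) with hAdef
  set B : ℝ × ℝ → ℝ :=
    fun y => 2 * α * u y * g y ^ (α - 1) * (D1 y * y.1 + D2 y * (y.2 + 1)) with hBdef
  set F : ℝ × ℝ → ℝ := fun y => u y ^ 2 * g y ^ (α - 1) with hFdef

  set K : Set (ℝ × ℝ) := tsupport u with hKdef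
  have hK : IsCompact K := hsupp
  have hgΩpos : ∀ y ∈ Ω, (0:ℝ) < g y := fun y hy => lt_of_lt_of_le one_pos (hgΩ y hy)
  have hg0' : ∀ z, (0:ℝ) ≤ g z := hg0
  have hA0 : ∀ y, 0 ≤ A y := fun y => by
    have := Real.rpow_nonneg (hg0' y) α
    simp only [hAdef]; positivity
  have hF0 : ∀ y, 0 ≤ F y := fun y => by
    have := Real.rpow_nonneg (hg0' y) (α - 1)
    simp only [hFdef]; positivity
  -- continuity facts
  have hDcont : Continuous (fderiv ℝ u) := hu.continuous_fderiv (by simp)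
  have hD1c : Continuous D1 := hDcont.clm_apply continuous_const
  have hD2c : Continuous D2 := hDcont.clm_apply continuous_const
  have hgc : Continuous g := by
    simp only [hgdef]; fun_prop
  have huc : Continuous u := hu.continuous
  -- vanishing off K
  have hu0 : ∀ y, y ∉ K → u y = 0 := fun y hy => image_eq_zero_of_notMem_tsupport hy
  have hD0 : ∀ y, y ∉ K → fderiv ℝ u y = 0 := by
    intro y hy
    by_contra h
    exact hy (support_fderiv_subset ℝ (Function.mem_support.2 h))
  have hD10 : ∀ y, y ∉ K → D1 y = 0 := fun y hy => by simp [hD1def, hD0 y hy]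
  have hD20 : ∀ y, y ∉ K → D2 y = 0 := fun y hy => by simp [hD2def, hD0 y hy]
  -- integrability
  have hIA : IntegrableOn A Ω := by
    have := aux_int2 (φ := fun y => D1 y ^ 2 + D2 y ^ 2) (ψ := g) hΩ hK
      (by fun_prop) (fun y hy => by simp [hD10 y hy, hD20 y hy]) hgc hgΩ α
    exact this.congr_fun (fun y _ => by simp only [hAdef]; ring) hΩ.measurableSet
  have hIB : IntegrableOn B Ω := by
    have := aux_int2
      (φ := fun y => 2 * α * u y * (D1 y * y.1 + D2 y * (y.2 + 1))) (ψ := g) hΩ hK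
      (by fun_prop) (fun y hy => by simp [hu0 y hy]) hgc hgΩ (α - 1)
    exact this.congr_fun (fun y _ => by simp only [hBdef]; ring) hΩ.measurableSet
  have hIF : IntegrableOn F Ω := by
    have := aux_int2 (φ := fun y => u y ^ 2) (ψ := g) hΩ hK
      (by fun_prop) (fun y hy => by simp [hu0 y hy]) hgc hgΩ (α - 1)
    exact this.congr_fun (fun y _ => by simp only [hFdef]) hΩ.measurableSet
  -- the product of square roots
  set S : ℝ × ℝ → ℝ := fun y => 2 * α * (Real.sqrt (F y) * Real.sqrt (A y)) with hSdef
  have hsplit : ∀ y ∈ Ω, Real.sqrt (F y) * Real.sqrt (A y) =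
      |u y| * Real.sqrt (D1 y ^ 2 + D2 y ^ 2) * (g y ^ (α - 1) * Real.sqrt (g y)) := by
    intro y hy
    have hGpos := hgΩpos y hy
    have h1 : Real.sqrt (F y) = |u y| * g y ^ ((α - 1) / 2) := by
      rw [hFdef]
      rw [Real.sqrt_mul (sq_nonneg _), Real.sqrt_sq_eq_abs]
      congr 1
      rw [Real.sqrt_eq_rpow, ← Real.rpow_mul (hg0' y)]
      congr 1; ring
    have h2 : Real.sqrt (A y) = g y ^ (α / 2) * Real.sqrt (D1 y ^ 2 + D2 y ^ 2) := by
      rw [hAdef]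
      rw [Real.sqrt_mul (Real.rpow_nonneg (hg0' y) _)]
      congr 1
      rw [Real.sqrt_eq_rpow, ← Real.rpow_mul (hg0' y)]
      congr 1; ring
    rw [h1, h2]
    have h3 : g y ^ ((α - 1) / 2) * g y ^ (α / 2) = g y ^ (α - 1) * Real.sqrt (g y) := by
      rw [← Real.rpow_add hGpos, Real.sqrt_eq_rpow, ← Real.rpow_add hGpos]
      congr 1; ring
    calc |u y| * g y ^ ((α - 1) / 2) * (g y ^ (α / 2) * Real.sqrt (D1 y ^ 2 + D2 y ^ 2))
        = |u y| * Real.sqrt (D1 y ^ 2 + D2 y ^ 2) * (g y ^ ((α - 1) / 2) * g y ^ (α / 2)) := by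
          ring
      _ = |u y| * Real.sqrt (D1 y ^ 2 + D2 y ^ 2) * (g y ^ (α - 1) * Real.sqrt (g y)) := by
          rw [h3]
  have hIS : IntegrableOn S Ω := by
    have hbase := aux_int2
      (φ := fun y => 2 * α * (|u y| * Real.sqrt (D1 y ^ 2 + D2 y ^ 2))) (ψ := g) hΩ hK
      (by fun_prop) (fun y hy => by simp [hu0 y hy]) hgc hgΩ (α - 1/2)
    refine hbase.congr_fun (fun y hy => ?_) hΩ.measurableSet
    have hGpos := hgΩpos y hy
    have : g y ^ (α - 1/2) = g y ^ (α - 1) * Real.sqrt (g y) := by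
      rw [Real.sqrt_eq_rpow, ← Real.rpow_add hGpos]
      congr 1; ring
    simp only
    rw [this, hSdef]
    simp only
    rw [hsplit y hy]
    ring
  -- pointwise bound -B ≤ S on Ω
  have hBpt : ∀ y ∈ Ω, -B y ≤ S y := by
    intro y hy
    have hGpos := hgΩpos y hy
    have hX : |D1 y * y.1 + D2 y * (y.2 + 1)| ≤
        Real.sqrt (D1 y ^ 2 + D2 y ^ 2) * Real.sqrt (g y) := by
      simpa [hgdef] using aux_cs (D1 y) (D2 y) y.1 (y.2 + 1)
    have h2 : -(u y * (D1 y * y.1 + D2 y * (y.2 + 1))) ≤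
        |u y| * (Real.sqrt (D1 y ^ 2 + D2 y ^ 2) * Real.sqrt (g y)) := by
      calc -(u y * (D1 y * y.1 + D2 y * (y.2 + 1)))
          ≤ |u y * (D1 y * y.1 + D2 y * (y.2 + 1))| := neg_le_abs _
        _ = |u y| * |D1 y * y.1 + D2 y * (y.2 + 1)| := abs_mul _ _
        _ ≤ |u y| * (Real.sqrt (D1 y ^ 2 + D2 y ^ 2) * Real.sqrt (g y)) :=
            mul_le_mul_of_nonneg_left hX (abs_nonneg _)
    have hfac : (0:ℝ) ≤ 2 * α * g y ^ (α - 1) := by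
      have := Real.rpow_nonneg (hg0' y) (α - 1)
      positivity
    have h3 : -B y = 2 * α * g y ^ (α - 1) *
        (-(u y * (D1 y * y.1 + D2 y * (y.2 + 1)))) := by
      simp only [hBdef]; ring
    have h4 := mul_le_mul_of_nonneg_left h2 hfac
    rw [h3]
    refine le_trans h4 ?_
    rw [hSdef]
    simp only
    rw [hsplit y hy]
    ring_nf
    exact le_refl _
  -- nonnegativity of integrals
  have IAnn : 0 ≤ ∫ y in Ω, A y := setIntegral_nonneg hΩ.measurableSet fun y _ => hA0 y
  have IFnn : 0 ≤ ∫ y in Ω, F y := setIntegral_nonneg hΩ.measurableSet fun y _ => hF0 y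
  -- rewrite the Poincaré inequality
  have hPF : (∫ y in Ω, u y ^ 2 * (y.1 ^ 2 + (y.2 + 1) ^ 2) ^ (α - 1)) = ∫ y in Ω, F y :=
    setIntegral_congr_fun hΩ.measurableSet fun y _ => by simp [hFdef, hgdef]
  have hPA : (∫ y in Ω, (y.1 ^ 2 + (y.2 + 1) ^ 2) ^ α *
      ((fderiv ℝ u y) (1, 0) ^ 2 + (fderiv ℝ u y) (0, 1) ^ 2)) = ∫ y in Ω, A y :=
    setIntegral_congr_fun hΩ.measurableSet fun y _ => by
      simp [hAdef, hgdef, hD1def, hD2def]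
  rw [hPF, hPA] at hPoincare
  -- rewrite the goal
  rw [hPA]
  have hEq : Set.EqOn
      (fun y : ℝ × ℝ => (fderiv ℝ u y) (1, 0) *
          (fderiv ℝ (fun z => u z * (z.1 ^ 2 + (z.2 + 1) ^ 2) ^ α) y) (1, 0) +
        (fderiv ℝ u y) (0, 1) *
          (fderiv ℝ (fun z => u z * (z.1 ^ 2 + (z.2 + 1) ^ 2) ^ α) y) (0, 1))
      (fun y => A y + B y) Ω := by
    intro y hy
    have hGpos : (0:ℝ) < y.1 ^ 2 + (y.2 + 1) ^ 2 := hgΩpos y hy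
    simp only
    rw [aux_fderiv_eval hu hGpos (1, 0), aux_fderiv_eval hu hGpos (0, 1)]
    simp only [hAdef, hBdef, hD1def, hD2def, hgdef]
    ring
  rw [setIntegral_congr_fun hΩ.measurableSet hEq, integral_add hIA hIB]
  -- the cross term estimate
  have hconj : Real.HolderConjugate 2 2 := Real.HolderConjugate.two_two
  have hmF : MemLp (fun y => Real.sqrt (F y)) (ENNReal.ofReal 2) (volume.restrict Ω) := by
    rw [ENNReal.ofReal_ofNat]
    refine (memLp_two_iff_integrable_sq ?_).2 ?_
    · exact (Real.continuous_sqrt.comp_continuousOn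
        (huc.continuousOn.pow 2 |>.mul (hgc.continuousOn.rpow_const
          (fun y hy => Or.inl (hgΩpos y hy).ne')))).aestronglyMeasurable hΩ.measurableSet
    · exact hIF.congr (ae_of_all _ fun y => (Real.sq_sqrt (hF0 y)).symm)
  have hmA : MemLp (fun y => Real.sqrt (A y)) (ENNReal.ofReal 2) (volume.restrict Ω) := by
    rw [ENNReal.ofReal_ofNat]
    refine (memLp_two_iff_integrable_sq ?_).2 ?_
    · refine (Real.continuous_sqrt.comp_continuousOn ?_).aestronglyMeasurable hΩ.measurableSet
      exact (hgc.continuousOn.rpow_const (fun y hy => Or.inl (hgΩpos y hy).ne')).mul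
        ((hD1c.pow 2 |>.add (hD2c.pow 2)).continuousOn)
    · exact hIA.congr (ae_of_all _ fun y => (Real.sq_sqrt (hA0 y)).symm)
  have hH := integral_mul_le_Lp_mul_Lq_of_nonneg (μ := volume.restrict Ω) hconj
    (ae_of_all _ fun y => Real.sqrt_nonneg (F y))
    (ae_of_all _ fun y => Real.sqrt_nonneg (A y)) hmF hmA
  have e1 : (∫ y in Ω, Real.sqrt (F y) ^ (2:ℝ)) = ∫ y in Ω, F y :=
    setIntegral_congr_fun hΩ.measurableSet fun y _ => by
      rw [Real.rpow_two, Real.sq_sqrt (hF0 y)]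
  have e2 : (∫ y in Ω, Real.sqrt (A y) ^ (2:ℝ)) = ∫ y in Ω, A y :=
    setIntegral_congr_fun hΩ.measurableSet fun y _ => by
      rw [Real.rpow_two, Real.sq_sqrt (hA0 y)]
  rw [e1, e2] at hH
  have hH' : (∫ y in Ω, Real.sqrt (F y) * Real.sqrt (A y)) ≤
      Real.sqrt (∫ y in Ω, F y) * Real.sqrt (∫ y in Ω, A y) := by
    rw [Real.sqrt_eq_rpow, Real.sqrt_eq_rpow]
    exact hH
  -- combine
  have hmono : (∫ y in Ω, -B y) ≤ ∫ y in Ω, S y :=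
    setIntegral_mono_on hIB.neg hIS hΩ.measurableSet hBpt
  have hSint : (∫ y in Ω, S y) = 2 * α * ∫ y in Ω, Real.sqrt (F y) * Real.sqrt (A y) := by
    simp only [hSdef]
    rw [MeasureTheory.integral_const_mul]
  have hIBneg : (∫ y in Ω, -B y) = -∫ y in Ω, B y := by rw [integral_neg]
  have hchain : -(∫ y in Ω, B y) ≤ α / α₀ * ∫ y in Ω, A y := by
    rw [← hIBneg]
    refine le_trans hmono ?_
    rw [hSint]
    have step1 : 2 * α * (∫ y in Ω, Real.sqrt (F y) * Real.sqrt (A y)) ≤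
        2 * α * (Real.sqrt (∫ y in Ω, F y) * Real.sqrt (∫ y in Ω, A y)) :=
      mul_le_mul_of_nonneg_left hH' (by positivity)
    refine le_trans step1 ?_
    have step2 : Real.sqrt (∫ y in Ω, F y) * Real.sqrt (∫ y in Ω, A y) ≤
        (1 / (2 * α₀) * Real.sqrt (∫ y in Ω, A y)) * Real.sqrt (∫ y in Ω, A y) :=
      mul_le_mul_of_nonneg_right hPoincare (Real.sqrt_nonneg _)
    refine le_trans (mul_le_mul_of_nonneg_left step2 (by positivity)) ?_
    rw [mul_assoc (1 / (2 * α₀)), Real.mul_self_sqrt IAnn]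
    apply le_of_eq
    field_simp
  nlinarith [hchain, IAnn]
end
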